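/- Let p, q ∈ (1,∞), n a nonnegative integer, and r ∈ (1−p, 1]. Set v = p/(r+p−1), so 1/v = (r+p−1)/p ∈ (0,1]. Then ∫₀^{π_{p,q}/2} cos_{p,q}^{pn+r}(t) dt = [(1/v)_n / ((1/v + 1/q)_n)] · π_{v*,q}/2, where for v = 1 (i.e. r = 1, v* = ∞) one uses the convention π_{∞,q} = 2. -/

import Mathlib

/-! The substitution `t = arcsin_{p,q} y` turns `∫ cos_{p,q}^m` into
`W((m-1)/p)`, where `W(s) = ∫₀¹ (1 - y^q)^s dy`, because the inverse function rule gives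
`cos_{p,q} (arcsin_{p,q} y) = (1 - y^q)^(1/p)`. Integrating `d/dy [y (1 - y^q)^(s+1)]` over `[0,1]`
yields `W(s+1) = (s+1)/(s+1+1/q) · W(s)`; iterating this `n` times from `s = 1/v - 1` produces the
Pochhammer quotient, and `W(1/v - 1) = W(-1/v*) = π_{v*,q}/2`. -/

open Set MeasureTheory Filter

/-- Generalized arcsine: `arcsin_{p,q}(x) = ∫₀ˣ (1 - tᵠ)^(-1/p) dt`. -/
noncomputable def gArcsin (p q x : ℝ) : ℝ := ∫ t in (0:ℝ)..x, (1 - t ^ q) ^ (-(1 / p))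

/-- Generalized pi: `π_{p,q} = 2 ∫₀¹ (1 - tᵠ)^(-1/p) dt`. -/
noncomputable def gPi (p q : ℝ) : ℝ := 2 * gArcsin p q 1

/-- `S` is the generalized sine `sin_{p,q}` (the inverse of `gArcsin p q` on `[0,1]`). -/
def IsGSin (p q : ℝ) (S : ℝ → ℝ) : Prop :=
  ∀ y ∈ Icc (0:ℝ) 1, S (gArcsin p q y) = y

/-- `C` is the generalized cosine `cos_{p,q}`, the derivative of `S = sin_{p,q}`
on `[0, π_{p,q}/2]`. -/
def IsGCos (p q : ℝ) (S C : ℝ → ℝ) : Prop :=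
  ∀ x ∈ Icc (0:ℝ) (gPi p q / 2), HasDerivWithinAt S (C x) (Icc (0:ℝ) (gPi p q / 2)) x

noncomputable def wallisIntegral (q s : ℝ) : ℝ := ∫ y in (0:ℝ)..1, (1 - y ^ q) ^ s

lemma gPi_div_two (p q : ℝ) : gPi p q / 2 = wallisIntegral q (-(1 / p)) := by
  rw [gPi, gArcsin, wallisIntegral]; ring

section OneSubRpow

variable {q s t : ℝ}

lemma one_sub_rpow_pos (hq : 0 < q) (h0 : 0 ≤ t) (h1 : t < 1) : 0 < 1 - t ^ q :=
  sub_pos.2 (Real.rpow_lt_one h0 h1 hq)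

lemma continuousAt_one_sub_rpow_rpow (hq : 0 < q) (h : 1 - t ^ q ≠ 0 ∨ 0 ≤ s) :
    ContinuousAt (fun t : ℝ => (1 - t ^ q) ^ s) t :=
  (continuousAt_const.sub (Real.continuousAt_rpow_const t q (Or.inr hq.le))).rpow_const h

/-- For `s < 0` the integrand is dominated by `(1 - t)^s`, because `t^q ≤ t` on `[0,1]`. -/
lemma intervalIntegrable_one_sub_rpow_rpow (hq : 1 ≤ q) (hs : -1 < s) {x y : ℝ}
    (hx : x ∈ Icc (0:ℝ) 1) (hy : y ∈ Icc (0:ℝ) 1) :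
    IntervalIntegrable (fun t : ℝ => (1 - t ^ q) ^ s) volume x y := by
  suffices h01 : IntervalIntegrable (fun t : ℝ => (1 - t ^ q) ^ s) volume 0 1 from
    h01.mono_set (by rw [uIcc_of_le zero_le_one]; exact uIcc_subset_Icc hx hy)
  rcases le_or_gt 0 s with hs0 | hs0
  · exact ContinuousOn.intervalIntegrable fun t _ =>
      (continuousAt_one_sub_rpow_rpow (by linarith) (Or.inr hs0)).continuousWithinAt
  have hmaj : IntervalIntegrable (fun t : ℝ => (1 - t) ^ s) volume 0 1 := by
    simpa using ((intervalIntegral.intervalIntegrable_rpow' (a := 0) (b := 1) hs).comp_sub_left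
      1).symm
  refine hmaj.mono_fun
    (by fun_prop : Measurable fun t : ℝ => (1 - t ^ q) ^ s).aestronglyMeasurable ?_
  filter_upwards [ae_restrict_mem measurableSet_uIoc] with t ⟨ht0, ht1⟩
  rw [min_eq_left zero_le_one] at ht0
  rw [max_eq_right zero_le_one] at ht1
  have hle : t ^ q ≤ t := by
    simpa using Real.rpow_le_rpow_of_exponent_ge ht0 ht1 hq
  have hb : 0 ≤ 1 - t ^ q := sub_nonneg.2 (Real.rpow_le_one ht0.le ht1 (by linarith))
  rw [Real.norm_of_nonneg (Real.rpow_nonneg hb s),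
    Real.norm_of_nonneg (Real.rpow_nonneg (by linarith) s)]
  rcases ht1.eq_or_lt with rfl | ht1
  · simp [Real.zero_rpow hs0.ne]
  · exact Real.rpow_le_rpow_of_nonpos (by linarith) (by linarith) hs0.le

end OneSubRpow

section GArcsin

variable {p q : ℝ}

lemma neg_one_lt_neg_one_div (hp : 1 < p) : -1 < -(1 / p) := by
  have : 1 / p < 1 := (div_lt_one (by linarith)).2 hp
  linarith

lemma gArcsin_strictMonoOn (hp : 1 < p) (hq : 1 ≤ q) : StrictMonoOn (gArcsin p q) (Icc 0 1) := by
  intro x hx y hy hxy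
  have hxy_int := intervalIntegrable_one_sub_rpow_rpow hq (neg_one_lt_neg_one_div hp) hx hy
  have hpos : 0 < ∫ t in x..y, (1 - t ^ q) ^ (-(1 / p)) :=
    intervalIntegral.intervalIntegral_pos_of_pos_on hxy_int (fun t ht => Real.rpow_pos_of_pos
      (one_sub_rpow_pos (by linarith) (hx.1.trans ht.1.le) (ht.2.trans_le hy.2)) _) hxy
  have hsplit : gArcsin p q x + ∫ t in x..y, (1 - t ^ q) ^ (-(1 / p)) = gArcsin p q y :=
    intervalIntegral.integral_add_adjacent_intervals
      (intervalIntegrable_one_sub_rpow_rpow hq (neg_one_lt_neg_one_div hp) ⟨le_rfl, zero_le_one⟩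
        hx) hxy_int
  linarith

lemma gArcsin_zero : gArcsin p q 0 = 0 := intervalIntegral.integral_same

lemma gArcsin_mapsTo (hp : 1 < p) (hq : 1 ≤ q) :
    MapsTo (gArcsin p q) (Icc 0 1) (Icc 0 (gPi p q / 2)) := fun y hy => by
  have hmono := (gArcsin_strictMonoOn (p := p) hp hq).monotoneOn
  refine ⟨gArcsin_zero (p := p) (q := q) ▸ hmono ⟨le_rfl, zero_le_one⟩ hy hy.1, ?_⟩
  rw [gPi, mul_div_cancel_left₀ _ two_ne_zero]
  exact hmono hy ⟨zero_le_one, le_rfl⟩ hy.2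

lemma gArcsin_continuousOn (hp : 1 < p) (hq : 1 ≤ q) : ContinuousOn (gArcsin p q) (Icc 0 1) := by
  have h := intervalIntegral.continuousOn_primitive_interval (μ := volume) (a := (0:ℝ)) (b := 1)
    (f := fun t : ℝ => (1 - t ^ q) ^ (-(1 / p))) (by
      rw [uIcc_of_le zero_le_one]
      exact (intervalIntegrable_iff_integrableOn_Icc_of_le zero_le_one).1
        (intervalIntegrable_one_sub_rpow_rpow hq (neg_one_lt_neg_one_div hp)
          ⟨le_rfl, zero_le_one⟩ ⟨zero_le_one, le_rfl⟩))
  rwa [uIcc_of_le zero_le_one] at h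

lemma gArcsin_image_Ioo (hp : 1 < p) (hq : 1 ≤ q) :
    gArcsin p q '' Ioo 0 1 = Ioo 0 (gArcsin p q 1) := by
  have hmono := gArcsin_strictMonoOn (p := p) hp hq
  refine Subset.antisymm ?_ ?_
  · rintro _ ⟨y, hy, rfl⟩
    exact ⟨gArcsin_zero (p := p) (q := q) ▸
      hmono ⟨le_rfl, zero_le_one⟩ (Ioo_subset_Icc_self hy) hy.1,
      hmono (Ioo_subset_Icc_self hy) ⟨zero_le_one, le_rfl⟩ hy.2⟩
  · simpa [gArcsin_zero] using intermediate_value_Ioo zero_le_one (gArcsin_continuousOn hp hq)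

lemma gArcsin_hasDerivAt (hp : 1 < p) (hq : 1 ≤ q) {y : ℝ} (hy : y ∈ Ioo (0:ℝ) 1) :
    HasDerivAt (gArcsin p q) ((1 - y ^ q) ^ (-(1 / p))) y :=
  intervalIntegral.integral_hasDerivAt_right
    (intervalIntegrable_one_sub_rpow_rpow hq (neg_one_lt_neg_one_div hp) ⟨le_rfl, zero_le_one⟩
      (Ioo_subset_Icc_self hy))
    (by fun_prop : Measurable fun t : ℝ =>
      (1 - t ^ q) ^ (-(1 / p))).aestronglyMeasurable.stronglyMeasurableAtFilter
    (continuousAt_one_sub_rpow_rpow (by linarith)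
      (Or.inl (one_sub_rpow_pos (by linarith) hy.1.le hy.2).ne'))

end GArcsin

section GCos

variable {p q : ℝ} {S C : ℝ → ℝ}

lemma IsGCos.apply_gArcsin (hp : 1 < p) (hq : 1 ≤ q) (hS : IsGSin p q S) (hC : IsGCos p q S C)
    {y : ℝ} (hy : y ∈ Ioo (0:ℝ) 1) : C (gArcsin p q y) = (1 - y ^ q) ^ (1 / p) := by
  have hcomp := (hC _ (gArcsin_mapsTo hp hq (Ioo_subset_Icc_self hy))).comp y
    (gArcsin_hasDerivAt hp hq hy).hasDerivWithinAt (gArcsin_mapsTo hp hq)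
  have hid : HasDerivWithinAt id (C (gArcsin p q y) * (1 - y ^ q) ^ (-(1 / p))) (Icc 0 1) y :=
    hcomp.congr (fun z hz => (hS z hz).symm) (hS y (Ioo_subset_Icc_self hy)).symm
  have hone : C (gArcsin p q y) * (1 - y ^ q) ^ (-(1 / p)) = 1 :=
    (uniqueDiffOn_Icc zero_lt_one y (Ioo_subset_Icc_self hy)).eq_deriv _ hid
      (hasDerivWithinAt_id y _)
  have hb : 0 < 1 - y ^ q := one_sub_rpow_pos (by linarith) hy.1.le hy.2
  rw [Real.rpow_neg hb.le, ← div_eq_mul_inv, div_eq_one_iff_eq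
    (Real.rpow_pos_of_pos hb _).ne'] at hone
  exact hone

lemma IsGCos.integral_rpow (hp : 1 < p) (hq : 1 ≤ q) (hS : IsGSin p q S) (hC : IsGCos p q S C)
    (m : ℝ) : ∫ t in (0:ℝ)..(gPi p q / 2), C t ^ m = wallisIntegral q ((m - 1) / p) := by
  have hpos : 0 < gArcsin p q 1 := gArcsin_zero (p := p) (q := q) ▸
    gArcsin_strictMonoOn hp hq ⟨le_rfl, zero_le_one⟩ ⟨zero_le_one, le_rfl⟩ zero_lt_one
  rw [gPi, mul_div_cancel_left₀ _ two_ne_zero, wallisIntegral,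
    intervalIntegral.integral_of_le hpos.le, intervalIntegral.integral_of_le zero_le_one,
    integral_Ioc_eq_integral_Ioo, integral_Ioc_eq_integral_Ioo, ← gArcsin_image_Ioo hp hq,
    integral_image_eq_integral_abs_deriv_smul measurableSet_Ioo
      (fun y hy => (gArcsin_hasDerivAt hp hq hy).hasDerivWithinAt)
      ((gArcsin_strictMonoOn hp hq).injOn.mono Ioo_subset_Icc_self)]
  refine setIntegral_congr_fun measurableSet_Ioo fun y hy => ?_
  have hb : 0 < 1 - y ^ q := one_sub_rpow_pos (by linarith) hy.1.le hy.2
  rw [smul_eq_mul, hC.apply_gArcsin hp hq hS hy, abs_of_pos (Real.rpow_pos_of_pos hb _),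
    ← Real.rpow_mul hb.le, ← Real.rpow_add hb]
  congr 1
  field_simp
  ring

end GCos

section Wallis

variable {q : ℝ}

lemma hasDerivAt_mul_one_sub_rpow_rpow (hq : 0 < q) {s y : ℝ} (hy : y ∈ Ioo (0:ℝ) 1) :
    HasDerivAt (fun y : ℝ => y * (1 - y ^ q) ^ (s + 1))
      ((1 + q * (s + 1)) * (1 - y ^ q) ^ (s + 1) - q * (s + 1) * (1 - y ^ q) ^ s) y := by
  have hb : 0 < 1 - y ^ q := one_sub_rpow_pos hq hy.1.le hy.2
  have hinner : HasDerivAt (fun y : ℝ => 1 - y ^ q) (-(q * y ^ (q - 1))) y := by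
    simpa using (Real.hasDerivAt_rpow_const (p := q) (Or.inl hy.1.ne')).const_sub 1
  have houter := Real.hasDerivAt_rpow_const (x := 1 - y ^ q) (p := s + 1) (Or.inl hb.ne')
  rw [add_sub_cancel_right] at houter
  refine ((hasDerivAt_id' y).mul (houter.comp y hinner)).congr_deriv ?_
  have hyq : y ^ (q - 1) * y = y ^ q := by
    rw [← Real.rpow_add_one hy.1.ne', sub_add_cancel]
  have hbs : (1 - y ^ q) ^ (s + 1) = (1 - y ^ q) * (1 - y ^ q) ^ s := by
    rw [Real.rpow_add_one hb.ne', mul_comm]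
  rw [Function.comp_apply]
  linear_combination -(q * (s + 1)) * hbs - (q * (s + 1) * (1 - y ^ q) ^ s) * hyq

lemma wallisIntegral_add_one (hq : 1 ≤ q) {s : ℝ} (hs : -1 < s) :
    wallisIntegral q (s + 1) = (s + 1) / (s + 1 + 1 / q) * wallisIntegral q s := by
  have hint : ∀ s' : ℝ, -1 < s' →
      IntervalIntegrable (fun t : ℝ => (1 - t ^ q) ^ s') volume 0 1 := fun s' hs' =>
    intervalIntegrable_one_sub_rpow_rpow hq hs' ⟨le_rfl, zero_le_one⟩ ⟨zero_le_one, le_rfl⟩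
  have hint1 := (hint (s + 1) (by linarith)).const_mul (1 + q * (s + 1))
  have hint0 := (hint s hs).const_mul (q * (s + 1))
  have hftc := intervalIntegral.integral_eq_sub_of_hasDeriv_right_of_le zero_le_one
    (fun t _ => (continuousAt_id.mul (continuousAt_one_sub_rpow_rpow (s := s + 1)
      (by linarith) (Or.inr (by linarith)))).continuousWithinAt)
    (fun y hy => (hasDerivAt_mul_one_sub_rpow_rpow (by linarith) hy).hasDerivWithinAt)
    (hint1.sub hint0)
  rw [intervalIntegral.integral_sub hint1 hint0, intervalIntegral.integral_const_mul,
    intervalIntegral.integral_const_mul] at hftc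
  norm_num [Real.zero_rpow (show s + 1 ≠ 0 by linarith)] at hftc
  have hq0 : q ≠ 0 := by positivity
  have hden : s + 1 + 1 / q ≠ 0 := by
    have : 0 < s + 1 := by linarith
    positivity
  rw [wallisIntegral, wallisIntegral, div_mul_eq_mul_div, eq_div_iff hden]
  refine mul_right_cancel₀ hq0 ?_
  linear_combination
    hftc + (∫ y in (0:ℝ)..1, (1 - y ^ q) ^ (s + 1)) * mul_inv_cancel₀ hq0

lemma wallisIntegral_sub_one_add_nat (hq : 1 ≤ q) {a : ℝ} (ha : 0 < a) (n : ℕ) :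
    wallisIntegral q (a - 1 + n) =
      (ascPochhammer ℝ n).eval a / (ascPochhammer ℝ n).eval (a + 1 / q) *
        wallisIntegral q (a - 1) := by
  induction n with
  | zero => simp
  | succ n ih =>
    rw [Nat.cast_succ, ← add_assoc,
      wallisIntegral_add_one hq (by linarith [n.cast_nonneg (α := ℝ)]), ih,
      ascPochhammer_succ_eval, ascPochhammer_succ_eval, show a - 1 + n + 1 = a + n by ring,
      show a + n + 1 / q = a + 1 / q + n by ring, mul_div_mul_comm]
    ring

end Wallis

/-- Theorem 3.4, formula (3.4) (Wallis-type formula for `cos_{p,q}`): for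
`r ∈ (1-p, 1]` and `1/v = (r+p-1)/p`,
`∫₀^{π_{p,q}/2} cos_{p,q}^{pn+r} t dt = (1/v)ₙ/((1/v + 1/q)ₙ) · π_{v*,q}/2`.
(For `v = 1`, in Lean `v/(v-1) = 0` and `gPi 0 q = 2∫₀¹(1-t^q)^0 dt = 2`, which is
exactly the paper's convention `π_{∞,q} := 2`.) -/
theorem stmt_9 (p q r : ℝ) (n : ℕ) (hp : 1 < p) (hq : 1 < q)
    (hr : r ∈ Ioc (1 - p) (1 : ℝ))
    (v : ℝ) (hv : v = p / (r + p - 1))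
    (S C : ℝ → ℝ) (hS : IsGSin p q S) (hC : IsGCos p q S C) :
    ∫ t in (0:ℝ)..(gPi p q / 2), C t ^ (p * (n : ℝ) + r) =
      (ascPochhammer ℝ n).eval (1 / v) / (ascPochhammer ℝ n).eval (1 / v + 1 / q) *
        (gPi (v / (v - 1)) q / 2) := by
  have hp0 : p ≠ 0 := by positivity
  have hinv : 1 / v = (r + p - 1) / p := by rw [hv, one_div_div]
  have ha : 0 < 1 / v := by rw [hinv]; exact div_pos (by linarith [hr.1]) (by positivity)
  have hv0 : v ≠ 0 := by rintro rfl; simp at ha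
  have hexp : (p * n + r - 1) / p = 1 / v - 1 + n := by
    rw [hinv]; field_simp; ring
  -- `1 / (v / (v - 1)) = (v - 1) / v` holds even for `v = 1`, where `v / (v - 1) = 0`.
  have hpi : -(1 / (v / (v - 1))) = 1 / v - 1 := by
    rw [one_div_div]; field_simp; ring
  rw [hC.integral_rpow hp hq.le hS, hexp, gPi_div_two, hpi,
    wallisIntegral_sub_one_add_nat hq.le ha]
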